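/- arXiv:1008.1659 — 11 statements merged into one kernel-verified Lean document; each statement's English description precedes it below -/
import Mathlib

section
/- If u is a prefix of some word in Q_q (the set of quasiperiodic words with quasiperiod q), then there exist words w, w' in Q_q with w a prefix of u, u a prefix of w', |u| - |w| ≤ |q|, and |w'| - |u| ≤ |q|. -/
/-- `u ^ n` for lists: concatenation of `n` copies of `u`. -/
def listPow {X : Type*} (u : List X) : ℕ → List X
  | 0 => []
  | n+1 => u ++ listPow u n

/-- `P_q = { v : e ⊏ v ⊑ q ⊏ v·q }`. -/
def Pq {X : Type*} (q : List X) : Set (List X) :=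
  {v | v ≠ [] ∧ v <+: q ∧ q <+: v ++ q}

/-- membership in the submonoid `P^*` generated by `P`. -/
def InStar {X : Type*} (P : Set (List X)) (w : List X) : Prop :=
  ∃ l : List (List X), (∀ v ∈ l, v ∈ P) ∧ w = l.flatten

/-- A finite word `w` is quasiperiodic with quasiperiod `q`. -/
def QuasiPeriodic {X : Type*} (q w : List X) : Prop :=
  ∀ j < w.length, ∃ u : List X, u.length ≤ j ∧ j < u.length + q.length ∧ (u ++ q) <+: w

/-- `Q_q`: the set of finite words quasiperiodic with quasiperiod `q`. -/
def Qq {X : Type*} (q : List X) : Set (List X) := {w | QuasiPeriodic q w}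

/-- `u` is a (finite) prefix of the infinite word `ξ`. -/
def InfPrefix {X : Type*} (ξ : ℕ → X) (u : List X) : Prop :=
  u = (List.range u.length).map ξ

/-- An infinite word `ξ` is quasiperiodic with quasiperiod `q`. -/
def QuasiPeriodicInf {X : Type*} (q : List X) (ξ : ℕ → X) : Prop :=
  ∀ j : ℕ, ∃ u : List X, u.length ≤ j ∧ j < u.length + q.length ∧ InfPrefix ξ (u ++ q)

/-- the star root `P \ (P²·P*)`. -/
def StarRoot {X : Type*} (P : Set (List X)) : Set (List X) :=
  {v | v ∈ P ∧ ¬ ∃ (a b : List X) (l : List (List X)),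
    a ∈ P ∧ b ∈ P ∧ (∀ x ∈ l, x ∈ P) ∧ v = a ++ b ++ l.flatten}

/-- `ξ ∈ P^ω`: infinite concatenation of nonempty words of `P`. -/
def InOmega {X : Type*} (P : Set (List X)) (ξ : ℕ → X) : Prop :=
  ∃ f : ℕ → List X, (∀ i, f i ∈ P ∧ f i ≠ []) ∧
    ∀ n, InfPrefix ξ ((List.range n).map f).flatten

/-!
A prefix of a word `x ∈ Q_q` that ends with an occurrence of `q` is again in `Q_q`, since the
occurrences of `q` in `x` that cover its positions lie inside it. So truncating `x` right after
the occurrence of `q` covering position `|u| - |q|` (resp. `|u| - 1`) gives `w` (resp. `w'`).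
-/

lemma nil_mem_Qq {X : Type*} (q : List X) : ([] : List X) ∈ Qq q := by
  intro j hj
  simp at hj

lemma length_pos_of_mem_Qq {X : Type*} {q x : List X} (hx : x ∈ Qq q) (hx₀ : 0 < x.length) :
    0 < q.length := by
  obtain ⟨t, ht_le, ht_lt, -⟩ := hx 0 hx₀
  omega

lemma append_mem_Qq_of_prefix {X : Type*} {q x s : List X} (hx : x ∈ Qq q)
    (hs : s ++ q <+: x) : s ++ q ∈ Qq q := by
  intro j hj
  rw [List.length_append] at hj
  rcases le_or_gt s.length j with hsj | hjs
  · exact ⟨s, hsj, hj, List.prefix_refl _⟩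
  · obtain ⟨t, ht_le, ht_lt, ht⟩ := hx j (by have := hs.length_le; rw [List.length_append] at this; omega)
    refine ⟨t, ht_le, ht_lt, List.prefix_of_prefix_length_le ht hs ?_⟩
    simp only [List.length_append]
    omega

lemma exists_mem_Qq_prefix_of_prefix {X : Type*} {q u x : List X} (hx : x ∈ Qq q)
    (hux : u <+: x) : ∃ w ∈ Qq q, w <+: u ∧ u.length ≤ w.length + q.length := by
  rcases le_or_gt u.length q.length with hshort | hlong
  · exact ⟨[], nil_mem_Qq q, List.nil_prefix, by simpa using hshort⟩
  · have hx_len := hux.length_le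
    have hq := length_pos_of_mem_Qq hx (by omega)
    have hj : u.length - q.length < x.length := by omega
    obtain ⟨t, ht_le, ht_lt, ht⟩ := hx _ hj
    refine ⟨t ++ q, append_mem_Qq_of_prefix hx ht, List.prefix_of_prefix_length_le ht hux ?_, ?_⟩
      <;> simp only [List.length_append] <;> omega

lemma exists_mem_Qq_extension_of_prefix {X : Type*} {q u x : List X} (hx : x ∈ Qq q)
    (hux : u <+: x) : ∃ w' ∈ Qq q, u <+: w' ∧ w'.length ≤ u.length + q.length := by
  rcases Nat.eq_zero_or_pos u.length with hu | hu
  · exact ⟨[], nil_mem_Qq q, by simp [List.length_eq_zero_iff.mp hu], by simp⟩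
  · have hj : u.length - 1 < x.length := by have := hux.length_le; omega
    obtain ⟨s, hs_le, hs_lt, hs⟩ := hx _ hj
    refine ⟨s ++ q, append_mem_Qq_of_prefix hx hs, List.prefix_of_prefix_length_le hux hs ?_, ?_⟩
      <;> simp only [List.length_append] <;> omega

theorem stmt1_general {X : Type*} (q : List X) (u : List X)
    (hu : ∃ x ∈ Qq q, u <+: x) :
    ∃ w ∈ Qq q, ∃ w' ∈ Qq q, w <+: u ∧ u <+: w' ∧
      u.length ≤ w.length + q.length ∧ w'.length ≤ u.length + q.length := by
  obtain ⟨x, hx, hux⟩ := hu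
  obtain ⟨w, hw, hwu, hw_len⟩ := exists_mem_Qq_prefix_of_prefix hx hux
  obtain ⟨w', hw', huw', hw'_len⟩ := exists_mem_Qq_extension_of_prefix hx hux
  exact ⟨w, hw, w', hw', hwu, huw', hw_len, hw'_len⟩

/-- Corollary: a prefix of a word in `Q_q` is sandwiched between two words of `Q_q`
within distance `|q|`. -/
theorem stmt1 {X : Type*} (q : List X) (hq : q ≠ []) (u : List X)
    (hu : ∃ x ∈ Qq q, u <+: x) :
    ∃ w ∈ Qq q, ∃ w' ∈ Qq q, w <+: u ∧ u <+: w' ∧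
      u.length ≤ w.length + q.length ∧ w'.length ≤ u.length + q.length :=
  stmt1_general q u hu
end

section
/- The set Q_q of nonempty quasiperiodic words with quasiperiod q equals P_q* · q, where P_q := { v : v is a nonempty prefix of q and q is a proper prefix of v·q }. In particular Q_q ∪ {e} ⊆ P_q*. -/
lemma flatten_qp {X : Type*} (q : List X) (hq : q ≠ []) :
    ∀ l : List (List X), (∀ v ∈ l, v ∈ Pq q) → QuasiPeriodic q (l.flatten ++ q) := by
  intro l
  induction l with
  | nil =>
    intro _ j hj
    exact ⟨[], by simp, by simpa using hj, by simp⟩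
  | cons v l ih =>
    intro hl j hj
    have hv : v ∈ Pq q := hl v (by simp)
    have ihq : QuasiPeriodic q (l.flatten ++ q) := ih fun x hx => hl x (by simp [hx])
    have hqpre : q <+: l.flatten ++ q := by
      obtain ⟨u, hu0, _, hu⟩ := ihq 0 (by simp [List.length_pos_iff, hq])
      rwa [List.length_eq_zero_iff.mp (Nat.le_zero.mp hu0)] at hu
    simp only [List.flatten_cons, List.append_assoc] at hj ⊢
    rcases lt_or_ge j v.length with h | h
    · refine ⟨[], by simp, ?_, ?_⟩
      · simpa using lt_of_lt_of_le h hv.2.1.length_le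
      · simp only [List.nil_append]
        exact hv.2.2.trans ((List.prefix_append_right_inj v).mpr hqpre)
    · obtain ⟨u, hu1, hu2, hu3⟩ := ihq (j - v.length)
        (by simp at hj ⊢; omega)
      refine ⟨v ++ u, by simp; omega, by simp; omega, ?_⟩
      rw [List.append_assoc]
      exact (List.prefix_append_right_inj v).mpr hu3

lemma qp_decomp {X : Type*} (q : List X) (hq : q ≠ []) :
    ∀ n (w : List X), w.length = n → QuasiPeriodic q w → w ≠ [] →
      ∃ l : List (List X), (∀ v ∈ l, v ∈ Pq q) ∧ w = l.flatten ++ q := by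
  intro n
  induction n using Nat.strong_induction_on with
  | _ n ih =>
    rintro w rfl hw hne
    have hqpos : 0 < q.length := List.length_pos_iff.mpr hq
    have hwpos : 0 < w.length := List.length_pos_iff.mpr hne
    obtain ⟨u, hu1, hu2, hu3⟩ := hw (w.length - 1) (by omega)
    have hle : (u ++ q).length ≤ w.length := hu3.length_le
    have hlen : (u ++ q).length = w.length := by simp at hle ⊢; omega
    have hwq : w = u ++ q := (hu3.eq_of_length hlen).symm
    rcases eq_or_ne u [] with rfl | hune
    · exact ⟨[], by simp, by simpa using hwq⟩
    · have hupos : 0 < u.length := List.length_pos_iff.mpr hune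
      have hulw : u.length ≤ w.length := by rw [hwq]; simp
      obtain ⟨u', h1, h2, h3⟩ := hw (u.length - 1) (by omega)
      have h1' : u'.length < u.length := by omega
      have h2' : u.length ≤ u'.length + q.length := by omega
      have hqp' : QuasiPeriodic q (u' ++ q) := by
        intro j hj
        simp only [List.length_append] at hj
        have hlen' : w.length = u.length + q.length := by rw [hwq, List.length_append]
        obtain ⟨u'', c1, c2, c3⟩ := hw j (by omega)
        rcases le_or_gt u''.length u'.length with hlu | hlu
        · exact ⟨u'', c1, c2, List.prefix_of_prefix_length_le c3 h3 (by simp; omega)⟩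
        · exact ⟨u', le_of_lt (lt_of_lt_of_le hlu c1), hj, List.prefix_refl _⟩
      have hlt : (u' ++ q).length < w.length := by rw [hwq]; simp; omega
      obtain ⟨l, hl, heq⟩ := ih _ hlt (u' ++ q) rfl hqp' (by simp [hq])
      have hfl : u' = l.flatten := List.append_cancel_right heq
      have hu'w : u' <+: w := (List.prefix_append u' q).trans h3
      have huw : u <+: w := by rw [hwq]; exact List.prefix_append _ _
      have hu'u : u' <+: u := List.prefix_of_prefix_length_le hu'w huw (le_of_lt h1')
      obtain ⟨z, hz⟩ := hu'u
      have hzlen : u'.length + z.length = u.length := by rw [← hz]; simp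
      have hzne : z ≠ [] := by
        intro h; rw [h] at hzlen; simp at hzlen; omega
      have hqz : q <+: z ++ q := by
        have h4 : u' ++ q <+: u' ++ (z ++ q) := by
          rw [← List.append_assoc, hz, ← hwq]; exact h3
        exact (List.prefix_append_right_inj u').mp h4
      have hzq : z <+: q :=
        List.prefix_of_prefix_length_le (List.prefix_append z q) hqz (by omega)
      refine ⟨l ++ [z], ?_, ?_⟩
      · intro v hv
        rcases List.mem_append.mp hv with h | h
        · exact hl v h
        · rw [List.mem_singleton.mp h]; exact ⟨hzne, hzq, hqz⟩
      · rw [hwq, ← hz, hfl]; simp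

/-- `Q_q = P_q^*·q ∪ {e} ⊆ P_q^*`. -/
theorem stmt3 {X : Type*} (q : List X) (hq : q ≠ []) :
    Qq q = {w : List X | ∃ u, InStar (Pq q) u ∧ w = u ++ q} ∪ {([] : List X)} ∧
    Qq q ⊆ {w : List X | InStar (Pq q) w} := by
  have hmain : Qq q = {w : List X | ∃ u, InStar (Pq q) u ∧ w = u ++ q} ∪ {([] : List X)} := by
    ext w
    constructor
    · intro hw
      rcases eq_or_ne w [] with rfl | hne
      · right; rfl
      · left
        obtain ⟨l, hl, heq⟩ := qp_decomp q hq w.length w rfl hw hne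
        exact ⟨l.flatten, ⟨l, hl, rfl⟩, heq⟩
    · rintro (⟨u, ⟨l, hl, rfl⟩, rfl⟩ | h)
      · exact flatten_qp q hq l hl
      · rw [Set.mem_singleton_iff.mp h]
        intro j hj; simp at hj
  refine ⟨hmain, ?_⟩
  intro w hw
  rw [hmain] at hw
  rcases hw with ⟨u, ⟨l, hl, rfl⟩, rfl⟩ | h
  · refine ⟨l ++ [q], ?_, by simp⟩
    intro v hv
    rcases List.mem_append.mp hv with h | h
    · exact hl v h
    · rw [List.mem_singleton.mp h]
      exact ⟨hq, List.prefix_refl _, List.prefix_append _ _⟩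
  · rw [Set.mem_singleton_iff.mp h]
    exact ⟨[], by simp, rfl⟩
end

section
/- The set of prefixes of words in P_q* equals the set of prefixes of words in Q_q, and both equal P_q* · Pref(q). -/
/-!
For `v ∈ P_q*` the word `v·q` is quasiperiodic: each factor `p ∈ P_q` shifts an occurrence of `q`
to another one, since `q ⊑ p·q`. Conversely, every occurrence `u·q` of `q` in a quasiperiodic word
starts at a position `u ∈ P_q*`: the last letter of `u` is covered by an earlier occurrence
`u₀·q`, and the gap `p` with `u = u₀·p` lies in `P_q` because both `u₀·q` and `u₀·p·q` are
prefixes of the same word. Applying the same covering argument to the last letter of an arbitrary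
prefix of a quasiperiodic word writes it as `u₀·p` with `u₀ ∈ P_q*` and `p ⊑ q`.
-/

namespace InStar

variable {X : Type*} {P : Set (List X)} {v w : List X}

theorem nil : InStar P [] := ⟨[], by simp, rfl⟩

theorem of_mem (hv : v ∈ P) : InStar P v := ⟨[v], by simpa using hv, by simp⟩

theorem append (hv : InStar P v) (hw : InStar P w) : InStar P (v ++ w) := by
  obtain ⟨l, hl, rfl⟩ := hv
  obtain ⟨m, hm, rfl⟩ := hw
  exact ⟨l ++ m, fun x hx => (List.mem_append.mp hx).elim (hl x) (hm x), by simp⟩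

end InStar

section Quasiperiod

variable {X : Type*} {q u v w : List X}

theorem inStar_Pq_self (q : List X) : InStar (Pq q) q := by
  rcases eq_or_ne q [] with rfl | hq
  · exact InStar.nil
  · exact InStar.of_mem ⟨hq, List.prefix_rfl, List.prefix_append _ _⟩

theorem prefix_append_of_mem_Pq (hv : v ∈ Pq q) (hw : q <+: w) : q <+: v ++ w :=
  hv.2.2.trans ((List.prefix_append_right_inj v).mpr hw)

theorem prefix_append_of_inStar_Pq (hv : InStar (Pq q) v) : q <+: v ++ q := by
  obtain ⟨l, hl, rfl⟩ := hv
  induction l with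
  | nil => simp
  | cons x l ih =>
    simpa using prefix_append_of_mem_Pq (hl x (by simp)) (ih fun y hy => hl y (by simp [hy]))

theorem QuasiPeriodic.append_of_mem_Pq (hw : QuasiPeriodic q w) (hv : v ∈ Pq q)
    (hqw : q <+: w) : QuasiPeriodic q (v ++ w) := by
  intro j hj
  by_cases hjv : j < v.length
  · exact ⟨[], Nat.zero_le _, by simpa using hjv.trans_le hv.2.1.length_le,
      by simpa using prefix_append_of_mem_Pq hv hqw⟩
  · obtain ⟨u, hu, hju, huw⟩ := hw (j - v.length) (by simp at hj; omega)
    refine ⟨v ++ u, by simp; omega, by simp; omega, ?_⟩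
    simpa using (List.prefix_append_right_inj v).mpr huw

theorem InStar.quasiPeriodic_append (hv : InStar (Pq q) v) : QuasiPeriodic q (v ++ q) := by
  obtain ⟨l, hl, rfl⟩ := hv
  induction l with
  | nil => exact fun j hj => ⟨[], Nat.zero_le _, by simpa using hj, by simp⟩
  | cons x l ih =>
    have hl' : ∀ y ∈ l, y ∈ Pq q := fun y hy => hl y (by simp [hy])
    simpa using
      (ih hl').append_of_mem_Pq (hl x (by simp)) (prefix_append_of_inStar_Pq ⟨l, hl', rfl⟩)

theorem QuasiPeriodic.exists_occurrence_covering (hw : QuasiPeriodic q w) (huw : u <+: w)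
    (hu : u ≠ []) :
    ∃ u₀ p, u₀ ++ q <+: w ∧ u = u₀ ++ p ∧ p ≠ [] ∧ p <+: q := by
  have hul := List.length_pos_iff.mpr hu
  obtain ⟨u₀, hu₀, hju₀, hu₀w⟩ := hw (u.length - 1) (by have := huw.length_le; omega)
  obtain ⟨p, rfl⟩ : u₀ <+: u :=
    List.prefix_of_prefix_length_le ((List.prefix_append _ _).trans hu₀w) huw (by omega)
  have huq : u₀ ++ p <+: u₀ ++ q :=
    List.prefix_of_prefix_length_le huw hu₀w (by simp at hju₀ ⊢; omega)
  refine ⟨u₀, p, hu₀w, rfl, ?_, (List.prefix_append_right_inj u₀).mp huq⟩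
  rintro rfl
  simp only [List.append_nil] at hu₀ hul
  omega

theorem QuasiPeriodic.inStar_of_append_prefix (hw : QuasiPeriodic q w) (huw : u ++ q <+: w) :
    InStar (Pq q) u := by
  induction hn : u.length using Nat.strong_induction_on generalizing u with
  | _ n ih =>
    rcases eq_or_ne u [] with rfl | hu
    · exact InStar.nil
    obtain ⟨u₀, p, hu₀w, rfl, hp, hpq⟩ :=
      hw.exists_occurrence_covering ((List.prefix_append _ _).trans huw) hu
    have hqpq : q <+: p ++ q := by
      refine (List.prefix_append_right_inj u₀).mp (List.prefix_of_prefix_length_le hu₀w ?_ ?_)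
      · simpa using huw
      · simp
    have hlen : u₀.length < n := by
      subst hn; simpa using List.length_pos_iff.mpr hp
    exact (ih _ hlen hu₀w rfl).append (InStar.of_mem ⟨hp, hpq, hqpq⟩)

theorem QuasiPeriodic.exists_inStar_append_prefix (hw : QuasiPeriodic q w) (huw : u <+: w) :
    ∃ v p, InStar (Pq q) v ∧ p <+: q ∧ u = v ++ p := by
  rcases eq_or_ne u [] with rfl | hu
  · exact ⟨[], [], InStar.nil, List.nil_prefix, rfl⟩
  obtain ⟨u₀, p, hu₀w, rfl, -, hpq⟩ := hw.exists_occurrence_covering huw hu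
  exact ⟨u₀, p, hw.inStar_of_append_prefix hu₀w, hpq, rfl⟩

end Quasiperiod

theorem stmt4_general {X : Type*} (q : List X) :
    {u : List X | ∃ w, InStar (Pq q) w ∧ u <+: w} = {u : List X | ∃ w ∈ Qq q, u <+: w} ∧
    {u : List X | ∃ w ∈ Qq q, u <+: w} =
      {u : List X | ∃ v p : List X, InStar (Pq q) v ∧ p <+: q ∧ u = v ++ p} := by
  have hAB : {u : List X | ∃ w, InStar (Pq q) w ∧ u <+: w} ⊆ {u | ∃ w ∈ Qq q, u <+: w} :=
    fun u ⟨v, hv, huv⟩ => ⟨v ++ q, hv.quasiPeriodic_append, huv.trans (List.prefix_append _ _)⟩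
  have hBC : {u : List X | ∃ w ∈ Qq q, u <+: w} ⊆
      {u | ∃ v p : List X, InStar (Pq q) v ∧ p <+: q ∧ u = v ++ p} :=
    fun u ⟨_, hw, huw⟩ => QuasiPeriodic.exists_inStar_append_prefix hw huw
  have hCA : {u : List X | ∃ v p : List X, InStar (Pq q) v ∧ p <+: q ∧ u = v ++ p} ⊆
      {u | ∃ w, InStar (Pq q) w ∧ u <+: w} := by
    rintro _ ⟨v, p, hv, hpq, rfl⟩
    exact ⟨v ++ q, hv.append (inStar_Pq_self q), (List.prefix_append_right_inj v).mpr hpq⟩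
  exact ⟨hAB.antisymm (hBC.trans hCA), hBC.antisymm (hCA.trans hAB)⟩

/-- `Pref(P_q^*) = Pref(Q_q) = P_q^*·Pref(q)`. -/
theorem stmt4 {X : Type*} (q : List X) (hq : q ≠ []) :
    {u : List X | ∃ w, InStar (Pq q) w ∧ u <+: w} = {u : List X | ∃ w ∈ Qq q, u <+: w} ∧
    {u : List X | ∃ w ∈ Qq q, u <+: w} =
      {u : List X | ∃ v p : List X, InStar (Pq q) v ∧ p <+: q ∧ u = v ++ p} :=
  stmt4_general q
end

section
/- An infinite word ξ is quasiperiodic with quasiperiod q if and only if ξ ∈ P_q^ω, i.e., ξ is an infinite concatenation of words from P_q. -/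
/-! If `ξ` has quasiperiod `q`, then `q` occurs at position `0` and after every occurrence there
is another one at most `|q|` positions further; the factors between consecutive occurrences are
prefixes of `q` followed by `q`, i.e. words of `P_q`. Conversely, if `ξ = v₀ v₁ ⋯` with `vᵢ ∈ P_q`,
then `q ⊑ w · q` for every product `w` of words of `P_q`; taking for `w` a product of `|q|` of
the `vᵢ`, which is at least as long as `q`, shows that `q` occurs at every cut point, and the
cut points are at most `|q|` apart. -/

section
variable {X : Type*}

def factorAt (ξ : ℕ → X) (a n : ℕ) : List X := (List.range n).map fun i => ξ (a + i)

@[simp] theorem length_factorAt (ξ : ℕ → X) (a n : ℕ) : (factorAt ξ a n).length = n := by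
  simp [factorAt]

theorem factorAt_add (ξ : ℕ → X) (a m n : ℕ) :
    factorAt ξ a (m + n) = factorAt ξ a m ++ factorAt ξ (a + m) n := by
  simp [factorAt, List.range_add, Function.comp_def, Nat.add_assoc]

theorem factorAt_prefix_factorAt (ξ : ℕ → X) (a : ℕ) {m n : ℕ} (h : m ≤ n) :
    factorAt ξ a m <+: factorAt ξ a n := by
  obtain ⟨k, rfl⟩ := Nat.exists_eq_add_of_le h
  rw [factorAt_add]
  exact List.prefix_append _ _

theorem infPrefix_iff {ξ : ℕ → X} {u : List X} :
    InfPrefix ξ u ↔ factorAt ξ 0 u.length = u := by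
  simp [InfPrefix, factorAt, eq_comm]

theorem infPrefix_factorAt (ξ : ℕ → X) (n : ℕ) : InfPrefix ξ (factorAt ξ 0 n) := by
  rw [infPrefix_iff, length_factorAt]

theorem infPrefix_append_iff {ξ : ℕ → X} {u w : List X} :
    InfPrefix ξ (u ++ w) ↔ InfPrefix ξ u ∧ factorAt ξ u.length w.length = w := by
  simp only [infPrefix_iff, List.length_append, factorAt_add, Nat.zero_add]
  exact ⟨fun h => List.append_inj h (length_factorAt _ _ _),
    fun ⟨h₁, h₂⟩ => congrArg₂ (· ++ ·) h₁ h₂⟩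

theorem InfPrefix.of_prefix {ξ : ℕ → X} {u v : List X} (h : u <+: v) (hv : InfPrefix ξ v) :
    InfPrefix ξ u := by
  obtain ⟨t, rfl⟩ := h
  exact (infPrefix_append_iff.mp hv).1

theorem StrictMono.exists_le_lt_succ {s : ℕ → ℕ} (hs : StrictMono s) {j : ℕ}
    (h0 : s 0 ≤ j) :
    ∃ n, s n ≤ j ∧ j < s (n + 1) := by
  classical
  have hex : ∃ m, j < s m := ⟨j + 1, Nat.lt_of_lt_of_le j.lt_succ_self (hs.id_le _)⟩
  obtain ⟨n, hn⟩ : ∃ n, Nat.find hex = n + 1 :=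
    Nat.exists_eq_succ_of_ne_zero fun h => by have := Nat.find_spec hex; rw [h] at this; omega
  exact ⟨n, not_lt.mp (Nat.find_min hex (by omega)), hn ▸ Nat.find_spec hex⟩

theorem List.length_le_length_flatten {l : List (List X)} (hl : ∀ v ∈ l, v ≠ []) :
    l.length ≤ l.flatten.length := by
  rw [List.length_flatten, ← List.length_map List.length]
  refine List.length_le_sum_of_one_le _ fun n hn => ?_
  obtain ⟨v, hv, rfl⟩ := List.mem_map.mp hn
  exact List.length_pos_iff.mpr (hl v hv)

theorem prefix_flatten_append_of_forall_mem_Pq {q : List X} {l : List (List X)}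
    (hl : ∀ v ∈ l, v ∈ Pq q) : q <+: l.flatten ++ q := by
  induction l with
  | nil => simp
  | cons v l ih =>
    rw [List.flatten_cons, List.append_assoc]
    exact (hl v List.mem_cons_self).2.2.trans <|
      List.prefix_append_right_inj v |>.mpr (ih fun w hw => hl w (List.mem_cons_of_mem _ hw))

def concatPrefix (f : ℕ → List X) (n : ℕ) : List X := ((List.range n).map f).flatten

theorem concatPrefix_succ (f : ℕ → List X) (n : ℕ) :
    concatPrefix f (n + 1) = concatPrefix f n ++ f n := by
  simp [concatPrefix, List.range_succ]

theorem concatPrefix_add (f : ℕ → List X) (m n : ℕ) :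
    concatPrefix f (m + n) = concatPrefix f m ++ concatPrefix (fun i => f (m + i)) n := by
  simp [concatPrefix, List.range_add, Function.comp_def]

theorem prefix_concatPrefix_of_forall_mem_Pq {q : List X} {f : ℕ → List X}
    (hf : ∀ i, f i ∈ Pq q) {n : ℕ} (hn : q.length ≤ n) : q <+: concatPrefix f n := by
  have hlen := List.length_le_length_flatten (l := (List.range n).map f)
    (by simpa using fun i _ => (hf i).1)
  rw [List.length_map, List.length_range] at hlen
  exact List.prefix_of_prefix_length_le
    (prefix_flatten_append_of_forall_mem_Pq (by simpa using fun i _ => hf i))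
    (List.prefix_append _ _) (hn.trans hlen)

theorem factorAt_mem_Pq {ξ : ℕ → X} {q : List X} {a b : ℕ} (hab : a < b)
    (hba : b ≤ a + q.length) (ha : factorAt ξ a q.length = q) (hb : factorAt ξ b q.length = q) :
    factorAt ξ a (b - a) ∈ Pq q := by
  obtain ⟨k, rfl⟩ := Nat.exists_eq_add_of_le hab.le
  rw [Nat.add_sub_cancel_left]
  refine ⟨List.ne_nil_of_length_pos (by rw [length_factorAt]; omega), ?_, ?_⟩
  · have := factorAt_prefix_factorAt ξ a (show k ≤ q.length by omega)
    rwa [ha] at this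
  · have := factorAt_prefix_factorAt ξ a (show q.length ≤ k + q.length by omega)
    rwa [factorAt_add, hb, ha] at this

theorem inOmega_of_strictMono {P : Set (List X)} {ξ : ℕ → X} {c : ℕ → ℕ} (hc0 : c 0 = 0)
    (hc : StrictMono c) (hP : ∀ n, factorAt ξ (c n) (c (n + 1) - c n) ∈ P) : InOmega P ξ := by
  refine ⟨fun n => factorAt ξ (c n) (c (n + 1) - c n), fun n => ⟨hP n, ?_⟩, fun n => ?_⟩
  · exact List.ne_nil_of_length_pos (by rw [length_factorAt]; have := hc (Nat.lt_add_one n); omega)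
  · change InfPrefix ξ (concatPrefix _ n)
    suffices concatPrefix _ n = factorAt ξ 0 (c n) from this ▸ infPrefix_factorAt ξ (c n)
    induction n with
    | zero => simp [concatPrefix, hc0, factorAt]
    | succ n ih =>
      have := factorAt_add ξ 0 (c n) (c (n + 1) - c n)
      rw [Nat.zero_add, Nat.add_sub_cancel' (hc (Nat.lt_add_one n)).le] at this
      rw [concatPrefix_succ, ih, this]

theorem QuasiPeriodicInf.exists_occurrence {q : List X} {ξ : ℕ → X} (h : QuasiPeriodicInf q ξ)
    (j : ℕ) : ∃ r ≤ j, j < r + q.length ∧ factorAt ξ r q.length = q := by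
  obtain ⟨u, hu, hju, hξ⟩ := h j
  exact ⟨u.length, hu, hju, (infPrefix_append_iff.mp hξ).2⟩

theorem QuasiPeriodicInf.inOmega_Pq {q : List X} {ξ : ℕ → X} (h : QuasiPeriodicInf q ξ) :
    InOmega (Pq q) ξ := by
  obtain ⟨r, hr, -, hocc₀⟩ := h.exists_occurrence 0
  rw [Nat.le_zero.mp hr] at hocc₀
  choose next hle hlt hocc using fun p => h.exists_occurrence (p + q.length)
  have hsucc : ∀ n, next^[n + 1] 0 = next (next^[n] 0) := fun n =>
    Function.iterate_succ_apply' next n 0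
  have hocc' : ∀ n, factorAt ξ (next^[n] 0) q.length = q
    | 0 => hocc₀
    | n + 1 => hsucc n ▸ hocc _
  refine inOmega_of_strictMono (c := fun n => next^[n] 0) rfl
    (strictMono_nat_of_lt_succ fun n => ?_) fun n => ?_
  · have := hlt (next^[n] 0)
    rw [hsucc]; omega
  · have := hlt (next^[n] 0)
    have := hle (next^[n] 0)
    exact factorAt_mem_Pq (by rw [hsucc]; omega) (by rw [hsucc]; omega) (hocc' n) (hocc' (n + 1))

theorem InOmega.quasiPeriodicInf {q : List X} {ξ : ℕ → X} (h : InOmega (Pq q) ξ) :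
    QuasiPeriodicInf q ξ := by
  obtain ⟨f, hf, hξ⟩ := h
  have hlen : ∀ n, (concatPrefix f (n + 1)).length = (concatPrefix f n).length + (f n).length :=
    fun n => by rw [concatPrefix_succ, List.length_append]
  have hs : StrictMono fun n => (concatPrefix f n).length := strictMono_nat_of_lt_succ fun n => by
    have := List.length_pos_iff.mpr (hf n).2
    simp only [hlen]; omega
  intro j
  obtain ⟨n, hnj, hjn⟩ := hs.exists_le_lt_succ (j := j) (by simp [concatPrefix])
  refine ⟨concatPrefix f n, hnj, ?_, (hξ (n + q.length)).of_prefix ?_⟩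
  · have := (hf n).1.2.1.length_le
    simp only [hlen] at hjn; omega
  · rw [← concatPrefix, concatPrefix_add, List.prefix_append_right_inj]
    exact prefix_concatPrefix_of_forall_mem_Pq (fun i => (hf (n + i)).1) le_rfl

end

theorem stmt5_general {X : Type*} (q : List X) (ξ : ℕ → X) :
    QuasiPeriodicInf q ξ ↔ InOmega (Pq q) ξ :=
  ⟨QuasiPeriodicInf.inOmega_Pq, InOmega.quasiPeriodicInf⟩

/-- An infinite word has quasiperiod `q` iff it lies in `P_q^ω`. -/
theorem stmt5 {X : Type*} (q : List X) (hq : q ≠ []) (ξ : ℕ → X) :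
    QuasiPeriodicInf q ξ ↔ InOmega (Pq q) ξ :=
  stmt5_general q ξ
end

section
/- The shortest word q_0 in P_q is primitive, i.e., q_0 is not a proper power u^n with n > 1 of any word u. -/
/-
A word `v` lies in `P_q` exactly when it is a nonempty prefix of `q` and a period of `q`.
If `q₀ = uⁿ` with `n > 1`, the period `|q₀|` makes `q` a prefix of a long power of `q₀`,
hence of a power of `u`, so `|u|` is a period of `q` as well and `u ∈ P_q` is shorter than `q₀`.
-/

lemma listPow_length {X : Type*} (u : List X) (n : ℕ) :
    (listPow u n).length = n * u.length := by
  induction n with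
  | zero => simp [listPow]
  | succ n ih => simp [listPow, ih, Nat.succ_mul, Nat.add_comm]

lemma listPow_one {X : Type*} (u : List X) : listPow u 1 = u := by
  simp [listPow]

lemma listPow_add {X : Type*} (u : List X) (m n : ℕ) :
    listPow u (m + n) = listPow u m ++ listPow u n := by
  induction m with
  | zero => simp [listPow]
  | succ m ih => rw [Nat.succ_add, listPow, listPow, ih, List.append_assoc]

lemma listPow_mul {X : Type*} (u : List X) (m n : ℕ) :
    listPow u (m * n) = listPow (listPow u m) n := by
  induction n with
  | zero => simp [listPow]
  | succ n ih => rw [Nat.mul_succ, Nat.add_comm, listPow_add, ih, listPow]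

lemma listPow_isPrefix_listPow {X : Type*} (u : List X) {m n : ℕ} (h : m ≤ n) :
    listPow u m <+: listPow u n := by
  obtain ⟨k, rfl⟩ := Nat.exists_eq_add_of_le h
  rw [listPow_add]
  exact List.prefix_append _ _

lemma isPrefix_listPow_append_of_isPrefix_append {X : Type*} {q v : List X}
    (h : q <+: v ++ q) (k : ℕ) : q <+: listPow v k ++ q := by
  induction k with
  | zero => simp [listPow]
  | succ k ih =>
    rw [listPow, List.append_assoc]
    exact h.trans (List.prefix_append_right_inj v |>.mpr ih)

lemma isPrefix_listPow_of_isPrefix_append {X : Type*} {q v : List X} (hv : v ≠ [])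
    (h : q <+: v ++ q) : q <+: listPow v q.length := by
  have hlen : q.length ≤ (listPow v q.length).length := by
    rw [listPow_length]
    exact Nat.le_mul_of_pos_right _ (List.length_pos_iff.mpr hv)
  exact List.prefix_of_prefix_length_le (isPrefix_listPow_append_of_isPrefix_append h _)
    (List.prefix_append _ _) hlen

lemma isPrefix_append_of_isPrefix_listPow {X : Type*} {q u : List X} {m : ℕ}
    (h : q <+: listPow u m) : q <+: u ++ q := by
  have hq : q <+: listPow u (m + 1) := h.trans (listPow_isPrefix_listPow u m.le_succ)
  have huq : u ++ q <+: listPow u (m + 1) := List.prefix_append_right_inj u |>.mpr h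
  exact List.prefix_of_prefix_length_le hq huq (by simp)

lemma mem_Pq_of_listPow_mem_Pq {X : Type*} {q u : List X} {n : ℕ} (hn : 0 < n)
    (h : listPow u n ∈ Pq q) : u ∈ Pq q := by
  obtain ⟨hne, hpre, hper⟩ := h
  refine ⟨?_, ?_, ?_⟩
  · rintro rfl
    exact hne (List.eq_nil_of_length_eq_zero (by simp [listPow_length]))
  · exact (listPow_one u ▸ listPow_isPrefix_listPow u hn).trans hpre
  · have := isPrefix_listPow_of_isPrefix_append hne hper
    rw [← listPow_mul] at this
    exact isPrefix_append_of_isPrefix_listPow this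

theorem stmt8_general {X : Type*} (q : List X) (q0 : List X)
    (h0 : q0 ∈ Pq q) (hmin : ∀ v ∈ Pq q, q0.length ≤ v.length) :
    ¬ ∃ (u : List X) (n : ℕ), 1 < n ∧ q0 = listPow u n := by
  rintro ⟨u, n, hn, rfl⟩
  have hu : u ∈ Pq q := mem_Pq_of_listPow_mem_Pq (by omega) h0
  have hle := hmin u hu
  have hpos : 0 < u.length := List.length_pos_iff.mpr hu.1
  rw [listPow_length] at hle
  nlinarith

/-- The shortest word `q₀` of `P_q` is primitive. -/
theorem stmt8 {X : Type*} (q : List X) (hq : q ≠ []) (q0 : List X)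
    (h0 : q0 ∈ Pq q) (hmin : ∀ v ∈ Pq q, q0.length ≤ v.length) :
    ¬ ∃ (u : List X) (n : ℕ), 1 < n ∧ q0 = listPow u n :=
  stmt8_general q q0 h0 hmin
end

section
/- If v ∈ P_q and |v| ≤ |q| - |q_0|, where q_0 is the shortest element of P_q, then v is a power of q_0. -/
/-! The length of every `v ∈ P_q` is a period of `q`. By the periodicity lemma of Fine and Wilf,
`|v| + |q₀| ≤ |q|` makes `gcd |v| |q₀|` a period of `q` as well; the prefix of `q` of that length
lies in `P_q`, so minimality of `q₀` forces `gcd |v| |q₀| = |q₀|`. Hence `|q₀|` divides `|v|`, and a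
prefix of `q` whose length is a multiple of the period `|q₀|` is a power of `q₀`. -/

open List

theorem List.HasPeriod.take_mul_eq_listPow {X : Type*} {w : List X} {p : ℕ} (hw : w.HasPeriod p) :
    ∀ {k : ℕ}, p * k ≤ w.length → w.take (p * k) = listPow (w.take p) k
  | 0, _ => by simp [listPow]
  | k + 1, hk => by
    rw [Nat.mul_succ] at hk
    obtain ⟨t, ht⟩ := hw.drop_prefix
    have hlen : p * k ≤ (w.drop p).length := by rw [length_drop]; omega
    have htake : (w.drop p).take (p * k) = w.take (p * k) := by
      conv_rhs => rw [← ht]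
      exact (take_append_of_le_length hlen).symm
    rw [Nat.mul_succ, Nat.add_comm, take_add, htake,
      hw.take_mul_eq_listPow (by omega)]
    rfl

theorem hasPeriod_length_of_mem_Pq {X : Type*} {q v : List X} (hv : v ∈ Pq q) :
    q.HasPeriod v.length := by
  obtain ⟨-, hvq, hper⟩ := hv
  rwa [HasPeriod, ← prefix_iff_eq_take.mp hvq]

theorem take_mem_Pq {X : Type*} {q : List X} {p : ℕ} (hp : 0 < p) (hpq : p ≤ q.length)
    (hq : q.HasPeriod p) : q.take p ∈ Pq q := by
  refine ⟨?_, take_prefix p q, hq⟩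
  rw [← length_pos_iff, length_take]
  omega

theorem eq_listPow_of_mem_Pq_of_length_dvd {X : Type*} {q u v : List X} (hu : u ∈ Pq q)
    (hv : v ∈ Pq q) (hdvd : u.length ∣ v.length) : ∃ n, v = listPow u n := by
  obtain ⟨n, hn⟩ := hdvd
  refine ⟨n, ?_⟩
  calc v = q.take (u.length * n) := hn ▸ prefix_iff_eq_take.mp hv.2.1
    _ = listPow (q.take u.length) n :=
      (hasPeriod_length_of_mem_Pq hu).take_mul_eq_listPow (hn ▸ hv.2.1.length_le)
    _ = listPow u n := by rw [← prefix_iff_eq_take.mp hu.2.1]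

theorem length_dvd_of_mem_Pq_of_forall_length_le {X : Type*} {q q0 v : List X} (h0 : q0 ∈ Pq q)
    (hmin : ∀ w ∈ Pq q, q0.length ≤ w.length) (hv : v ∈ Pq q)
    (hlen : v.length + q0.length ≤ q.length) : q0.length ∣ v.length := by
  set g := v.length.gcd q0.length
  have hq0 : 0 < q0.length := length_pos_iff.mpr h0.1
  have hg_pos : 0 < g := Nat.gcd_pos_of_pos_right _ hq0
  have hg_le : g ≤ q0.length := Nat.gcd_le_right _ hq0
  have hg_per : q.HasPeriod g :=
    (hasPeriod_length_of_mem_Pq hv).gcd (hasPeriod_length_of_mem_Pq h0) (by omega)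
  have hg_ge : q0.length ≤ g := by
    simpa [length_take, Nat.min_eq_left (by omega : g ≤ q.length)] using
      hmin _ (take_mem_Pq hg_pos (by omega) hg_per)
  rw [← Nat.le_antisymm hg_le hg_ge]
  exact Nat.gcd_dvd_left _ _

theorem stmt10_general {X : Type*} (q : List X) (q0 : List X)
    (h0 : q0 ∈ Pq q) (hmin : ∀ v ∈ Pq q, q0.length ≤ v.length)
    (v : List X) (hv : v ∈ Pq q) (hlen : v.length + q0.length ≤ q.length) :
    ∃ m : ℕ, v = listPow q0 m :=
  eq_listPow_of_mem_Pq_of_length_dvd h0 hv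
    (length_dvd_of_mem_Pq_of_forall_length_le h0 hmin hv hlen)

/-- If `v ∈ P_q` and `|v| ≤ |q| - |q₀|` then `v` is a power of `q₀`. -/
theorem stmt10 {X : Type*} (q : List X) (hq : q ≠ []) (q0 : List X)
    (h0 : q0 ∈ Pq q) (hmin : ∀ v ∈ Pq q, q0.length ≤ v.length)
    (v : List X) (hv : v ∈ Pq q) (hlen : v.length + q0.length ≤ q.length) :
    ∃ m : ℕ, v = listPow q0 m :=
  stmt10_general q q0 h0 hmin v hv hlen
end

section
/- If v ∈ P_q and w·v is a prefix of q, then w is a power of q_0, the shortest element of P_q. -/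
/-!
If `v` is a nonempty period of `q` and `w·v ⊑ q`, then `w` is a period of `q` as well: for
`i ≥ |w|` one shows `q[i] = q[i - |w|]` by strong induction on `i`, reading both letters off the
copy of `v` after `w` when `i < |w| + |v|`, and stepping back by the period `|v|` otherwise.
Hence a nonempty such `w` lies in `P_q`, so the shortest element `q₀` is a prefix of it,
`w = q₀·w'`, and `w'·v ⊑ q` because `q ⊑ q₀·q`; induction on `|w|` finishes.
-/

section Periods

variable {X : Type*} {q u v w x : List X}

lemma getElem_eq_of_prefix_append (h : q <+: u ++ q) {i : ℕ} (hi : u.length ≤ i)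
    (hq : i < q.length) : q[i] = q[i - u.length] := by
  rw [h.getElem hq, List.getElem_append_right hi]

lemma prefix_append_of_getElem_eq (hu : u <+: q)
    (h : ∀ i (hi : u.length ≤ i) (hq : i < q.length), q[i] = q[i - u.length]) :
    q <+: u ++ q := by
  refine List.prefix_iff_getElem.mpr ⟨by simp, fun i hi => ?_⟩
  rcases lt_or_ge i u.length with hiu | hiu
  · rw [List.getElem_append_left hiu, hu.getElem hiu]
  · rw [List.getElem_append_right hiu, h i hiu hi]

lemma prefix_of_prefix_append_self (h : q <+: u ++ q) (hu : u.length ≤ q.length) : u <+: q :=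
  List.prefix_of_prefix_length_le (List.prefix_append u q) h hu

lemma prefix_of_append_prefix (h : q <+: u ++ q) (hux : u ++ x <+: q) : x <+: q :=
  (List.prefix_append_right_inj u).mp (hux.trans h)

lemma prefix_append_of_append_prefix (hv : v ≠ []) (hper : q <+: v ++ q)
    (hwv : w ++ v <+: q) : q <+: w ++ q := by
  have hlen : w.length + v.length ≤ q.length := by simpa using hwv.length_le
  have hvq : v <+: q := prefix_of_prefix_append_self hper (by omega)
  have hv0 : 0 < v.length := List.length_pos_iff.mpr hv
  refine prefix_append_of_getElem_eq ((List.prefix_append w v).trans hwv) fun i => ?_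
  induction i using Nat.strong_induction_on with
  | _ i ih =>
    intro hwi hi
    rcases lt_or_ge i (w.length + v.length) with hin | hout
    · have hiv : i - w.length < v.length := by omega
      calc q[i] = (w ++ v)[i]'(by simp only [List.length_append]; omega) :=
          (hwv.getElem _).symm
        _ = v[i - w.length] := List.getElem_append_right hwi
        _ = q[i - w.length] := hvq.getElem hiv
    · calc q[i] = q[i - v.length] := getElem_eq_of_prefix_append hper (by omega) hi
        _ = q[i - v.length - w.length] := ih _ (by omega) (by omega) (by omega)
        _ = q[i - w.length - v.length] := by simp only [Nat.sub_right_comm]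
        _ = q[i - w.length] := (getElem_eq_of_prefix_append hper (by omega) (by omega)).symm

end Periods

lemma mem_Pq_of_append_prefix {X : Type*} {q v w : List X} (hv : v ∈ Pq q) (hw : w ≠ [])
    (hwv : w ++ v <+: q) : w ∈ Pq q :=
  ⟨hw, (List.prefix_append w v).trans hwv, prefix_append_of_append_prefix hv.1 hv.2.2 hwv⟩

theorem stmt11_general {X : Type*} (q : List X) (q0 : List X)
    (h0 : q0 ∈ Pq q) (hmin : ∀ v ∈ Pq q, q0.length ≤ v.length)
    (v w : List X) (hv : v ∈ Pq q) (hwv : w ++ v <+: q) :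
    ∃ m : ℕ, w = listPow q0 m := by
  induction h : w.length using Nat.strong_induction_on generalizing w with
  | _ n ih =>
    rcases eq_or_ne w [] with rfl | hw
    · exact ⟨0, rfl⟩
    have hwP : w ∈ Pq q := mem_Pq_of_append_prefix hv hw hwv
    obtain ⟨w', rfl⟩ := List.prefix_of_prefix_length_le h0.2.1 hwP.2.1 (hmin w hwP)
    have hw'v : w' ++ v <+: q :=
      prefix_of_append_prefix h0.2.2 (by simpa only [List.append_assoc] using hwv)
    have hq0 : 0 < q0.length := List.length_pos_iff.mpr h0.1
    obtain ⟨m, rfl⟩ := ih w'.length (by simp only [List.length_append] at h; omega) w' hw'v rfl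
    exact ⟨m + 1, rfl⟩

/-- If `v ∈ P_q` and `w·v ⊑ q` then `w ∈ {q₀}^*`. -/
theorem stmt11 {X : Type*} (q : List X) (hq : q ≠ []) (q0 : List X)
    (h0 : q0 ∈ Pq q) (hmin : ∀ v ∈ Pq q, q0.length ≤ v.length)
    (v w : List X) (hv : v ∈ Pq q) (hwv : w ++ v <+: q) :
    ∃ m : ℕ, w = listPow q0 m :=
  stmt11_general q q0 h0 hmin v w hv hwv
end

section
/- The star root of P_q, defined as P_q \ (P_q²·P_q*), is a suffix code: no element of it is a proper suffix of another element. -/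
/-! If `u` is a proper suffix of `v`, write `v = w·u`. Since `q ⊑ u·q`, say `u·q = q·s`, the
condition `q ⊑ v·q = w·q·s` already forces `q ⊑ w·q`, so `w ∈ P_q` and `v = w·u ∈ P_q²`,
which the star root excludes. -/

section

variable {X : Type*}

theorem append_notMem_starRoot {P : Set (List X)} {a b : List X} (ha : a ∈ P) (hb : b ∈ P) :
    a ++ b ∉ StarRoot P :=
  fun h => h.2 ⟨a, b, [], ha, hb, by simp, by simp⟩

theorem starRoot_eq_of_isSuffix {P : Set (List X)}
    (hP : ∀ w u, w ≠ [] → w ++ u ∈ P → u ∈ P → w ∈ P) :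
    ∀ u ∈ StarRoot P, ∀ v ∈ StarRoot P, u <:+ v → u = v := by
  rintro u hu v hv ⟨w, rfl⟩
  obtain rfl | hw := eq_or_ne w []
  · rfl
  exact absurd hv (append_notMem_starRoot (hP w u hw hv.1 hu.1) hu.1)

theorem isPrefix_append_of_isPrefix_append_append {q w u : List X}
    (hwu : q <+: w ++ u ++ q) (hu : q <+: u ++ q) : q <+: w ++ q := by
  obtain ⟨s, hs⟩ := hu
  rw [List.append_assoc, ← hs, ← List.append_assoc] at hwu
  exact List.prefix_of_prefix_length_le hwu (List.prefix_append _ _) (by simp)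

theorem mem_Pq_of_append_mem {q w u : List X} (hw : w ≠ []) (hwu : w ++ u ∈ Pq q)
    (hu : q <+: u ++ q) : w ∈ Pq q :=
  ⟨hw, (List.prefix_append w u).trans hwu.2.1,
    isPrefix_append_of_isPrefix_append_append hwu.2.2 hu⟩

end

theorem stmt13_general {X : Type*} (q : List X) :
    ∀ u ∈ StarRoot (Pq q), ∀ v ∈ StarRoot (Pq q), u <:+ v → u = v :=
  starRoot_eq_of_isSuffix fun _ _ hw hwu hu => mem_Pq_of_append_mem hw hwu hu.2.2

/-- The star root of `P_q` is a suffix code. -/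
theorem stmt13 {X : Type*} (q : List X) (hq : q ≠ []) :
    ∀ u ∈ StarRoot (Pq q), ∀ v ∈ StarRoot (Pq q), u <:+ v → u = v :=
  stmt13_general q
end

section
/- Among the polynomials t^n - Σ_{i∈M} t^i with 0 ∈ M ⊆ { j : j ≤ (n-1)/2 } of fixed degree n ≥ 1, the polynomial t^n - Σ_{i=0}^{⌊(n-1)/2⌋} t^i has the largest positive root. -/
open Finset

lemma pow_mul_pow_lt_pow_mul_pow {r s : ℝ} {i n : ℕ} (hs : 0 < s) (hsr : s < r) (hin : i < n) :
    r ^ i * s ^ n < s ^ i * r ^ n := by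
  obtain ⟨k, rfl⟩ := Nat.exists_eq_add_of_lt hin
  have hpow : s ^ (k + 1) < r ^ (k + 1) := pow_lt_pow_left₀ hsr hs.le k.succ_ne_zero
  have hri : 0 < r ^ i * s ^ i := by have := hs.trans hsr; positivity
  calc r ^ i * s ^ (i + k + 1) = r ^ i * s ^ i * s ^ (k + 1) := by ring
    _ < r ^ i * s ^ i * r ^ (k + 1) := mul_lt_mul_of_pos_left hpow hri
    _ = s ^ i * r ^ (i + k + 1) := by ring

lemma sum_pow_lt_pow_of_root_lt {S : Finset ℕ} {n : ℕ} (hS : ∀ i ∈ S, i < n) {r s : ℝ}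
    (hs : 0 < s) (hsr : s < r) (hroot : ∑ i ∈ S, s ^ i = s ^ n) :
    ∑ i ∈ S, r ^ i < r ^ n := by
  have hne : S.Nonempty := by
    rw [nonempty_iff_ne_empty]
    rintro rfl
    exact (pow_pos hs n).ne' (by simpa using hroot.symm)
  have hlt : (∑ i ∈ S, r ^ i) * s ^ n < (∑ i ∈ S, s ^ i) * r ^ n := by
    simp only [sum_mul]
    exact sum_lt_sum_of_nonempty hne fun i hi => pow_mul_pow_lt_pow_mul_pow hs hsr (hS i hi)
  rw [hroot, mul_comm (s ^ n)] at hlt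
  exact lt_of_mul_lt_mul_right hlt (pow_pos hs n).le

theorem stmt16_general (n : ℕ) (hn : 1 ≤ n) (M : Finset ℕ)
    (hM : ∀ j ∈ M, 2 * j ≤ n - 1)
    (r s : ℝ) (hroot : r ^ n - ∑ i ∈ M, r ^ i = 0)
    (hs : 0 < s) (hsroot : s ^ n - ∑ i ∈ Finset.range ((n - 1) / 2 + 1), s ^ i = 0) :
    r ≤ s := by
  by_contra! hsr
  have hM_sub : M ⊆ range ((n - 1) / 2 + 1) := fun j hj =>
    mem_range.mpr (by have := hM j hj; omega)
  have hle : r ^ n ≤ ∑ i ∈ range ((n - 1) / 2 + 1), r ^ i := by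
    rw [sub_eq_zero.mp hroot]
    exact sum_le_sum_of_subset_of_nonneg hM_sub fun i _ _ => pow_nonneg (hs.trans hsr).le i
  have hlt : ∑ i ∈ range ((n - 1) / 2 + 1), r ^ i < r ^ n :=
    sum_pow_lt_pow_of_root_lt (fun i hi => by have := mem_range.mp hi; omega) hs hsr
      (sub_eq_zero.mp hsroot).symm
  exact hle.not_gt hlt

/-- Among the polynomials `t^n - ∑_{i ∈ M} t^i` with `0 ∈ M ⊆ {j : j ≤ (n-1)/2}` of
fixed degree `n`, the one with full `M` has the largest positive root. -/
theorem stmt16 (n : ℕ) (hn : 1 ≤ n) (M : Finset ℕ) (h0 : 0 ∈ M)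
    (hM : ∀ j ∈ M, 2 * j ≤ n - 1)
    (r s : ℝ) (hr : 0 < r) (hroot : r ^ n - ∑ i ∈ M, r ^ i = 0)
    (hs : 0 < s) (hsroot : s ^ n - ∑ i ∈ Finset.range ((n - 1) / 2 + 1), s ^ i = 0) :
    r ≤ s :=
  stmt16_general n hn M hM r s hroot hs hsroot
end

section
/- Let t_P be the unique positive root of t³ - t - 1 (the smallest Pisot number, t_P ≈ 1.3247). Then for each n ∉ {3, 5}, n ≥ 1, the polynomial p_n(t) := t^n - Σ_{i=0}^{⌊(n-1)/2⌋} t^i satisfies p_n(t_P) > 0; hence the positive root of every polynomial in the family 𝒫 is at most t_P, with maximum attained exactly by t³ - t - 1 and t⁵ - t² - t - 1 = (t² + 1)(t³ - t - 1). -/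
open Finset

noncomputable def pFull (n : ℕ) (t : ℝ) : ℝ :=
  t ^ n - ∑ i ∈ range ((n - 1) / 2 + 1), t ^ i

lemma pFull_add_two {n : ℕ} (hn : 1 ≤ n) (t : ℝ) :
    pFull (n + 2) t = t ^ 2 * pFull n t + t ^ ((n - 1) / 2 + 2) - t - 1 := by
  have hk : (n + 2 - 1) / 2 + 1 = (n - 1) / 2 + 2 := by omega
  have hshift : ∑ i ∈ range ((n - 1) / 2 + 3), t ^ i
      = t ^ 2 * ∑ i ∈ range ((n - 1) / 2 + 1), t ^ i + t + 1 := by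
    rw [sum_range_succ', sum_range_succ', mul_sum, pow_zero, zero_add, pow_one]
    congr 2
    exact sum_congr rfl fun i _ => by ring
  rw [sum_range_succ _ ((n - 1) / 2 + 2)] at hshift
  rw [pFull, pFull, hk]
  linear_combination -hshift

lemma pFull_three (t : ℝ) : pFull 3 t = t ^ 3 - t - 1 := by
  simp [pFull, sum_range_succ]
  ring

lemma pFull_five (t : ℝ) : pFull 5 t = (t ^ 2 + 1) * (t ^ 3 - t - 1) := by
  simp [pFull, sum_range_succ]
  ring

lemma sq_mul_pFull_lt_pFull_add_two {t : ℝ} (ht : 1 < t) (h3 : t + 1 ≤ t ^ 3) {n : ℕ}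
    (hn : 5 ≤ n) : t ^ 2 * pFull n t < pFull (n + 2) t := by
  have h4 : t ^ 3 < t ^ ((n - 1) / 2 + 2) := pow_lt_pow_right₀ ht (by omega)
  rw [pFull_add_two (by omega)]
  linarith

section Root

variable {t : ℝ} (ht : 1 < t) (hroot : t ^ 3 = t + 1)
include hroot

lemma pFull_eq_zero_of_root {n : ℕ} (hn : n = 3 ∨ n = 5) : pFull n t = 0 := by
  rcases hn with rfl | rfl
  · rw [pFull_three, hroot]; ring
  · rw [pFull_five, hroot]; ring

include ht

lemma pFull_pos_of_root {n : ℕ} (hn : 1 ≤ n) (h3 : n ≠ 3) (h5 : n ≠ 5) : 0 < pFull n t := by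
  induction n using Nat.strong_induction_on with
  | _ n ih =>
    by_cases hsmall : n ≤ 6
    · have ht6 : t ^ 6 = t ^ 2 + 2 * t + 1 := by linear_combination (t ^ 3 + t + 1) * hroot
      interval_cases n <;> first
        | omega
        | (norm_num [pFull, sum_range_succ, abs_of_pos (zero_lt_one.trans ht)]; nlinarith)
    obtain ⟨k, rfl⟩ : ∃ k, n = k + 2 := ⟨n - 2, by omega⟩
    have hk : 0 ≤ pFull k t := by
      by_cases hk5 : k = 5
      · exact (pFull_eq_zero_of_root hroot (.inr hk5)).ge
      · exact (ih k (by omega) (by omega) (by omega) hk5).le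
    calc 0 ≤ t ^ 2 * pFull k t := by positivity
      _ < pFull (k + 2) t := sq_mul_pFull_lt_pFull_add_two ht hroot.ge (by omega)

lemma pFull_nonneg_of_root {n : ℕ} (hn : 1 ≤ n) : 0 ≤ pFull n t := by
  by_cases h35 : n = 3 ∨ n = 5
  · exact (pFull_eq_zero_of_root hroot h35).ge
  push Not at h35
  exact (pFull_pos_of_root ht hroot hn h35.1 h35.2).le

lemma pFull_eq_zero_iff_of_root {n : ℕ} (hn : 1 ≤ n) : pFull n t = 0 ↔ n = 3 ∨ n = 5 := by
  constructor
  · intro h0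
    by_contra h35
    push Not at h35
    exact (pFull_pos_of_root ht hroot hn h35.1 h35.2).ne' h0
  · exact pFull_eq_zero_of_root hroot

end Root

/-- `∑_{i ∈ S} x^i / x^n`, written with inverse powers so that monotonicity in `x` is visible. -/
noncomputable def invPowSum (n : ℕ) (S : Finset ℕ) (x : ℝ) : ℝ :=
  ∑ i ∈ S, x⁻¹ ^ (n - i)

section InvPowSum

variable {n : ℕ} {S T : Finset ℕ} {x : ℝ}

lemma pow_sub_sum_pow_eq_mul (hx : x ≠ 0) (hS : ∀ i ∈ S, i ≤ n) :
    x ^ n - ∑ i ∈ S, x ^ i = x ^ n * (1 - invPowSum n S x) := by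
  rw [invPowSum, mul_sub, mul_one, mul_sum]
  congr 1
  refine sum_congr rfl fun i hi => ?_
  rw [inv_pow, ← pow_sub₀ x hx (Nat.sub_le n i), Nat.sub_sub_self (hS i hi)]

lemma pow_sub_sum_pow_nonneg_iff (hx : 0 < x) (hS : ∀ i ∈ S, i ≤ n) :
    0 ≤ x ^ n - ∑ i ∈ S, x ^ i ↔ invPowSum n S x ≤ 1 := by
  rw [pow_sub_sum_pow_eq_mul hx.ne' hS, mul_nonneg_iff_of_pos_left (by positivity), sub_nonneg]

lemma pow_sub_sum_pow_eq_zero_iff (hx : 0 < x) (hS : ∀ i ∈ S, i ≤ n) :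
    x ^ n - ∑ i ∈ S, x ^ i = 0 ↔ invPowSum n S x = 1 := by
  rw [pow_sub_sum_pow_eq_mul hx.ne' hS, mul_eq_zero, sub_eq_zero, eq_comm (a := (1 : ℝ))]
  simp [hx.ne']

lemma invPowSum_strictAntiOn (hS : S.Nonempty) (hSn : ∀ i ∈ S, i < n) :
    StrictAntiOn (invPowSum n S) (Set.Ioi 0) := by
  intro a ha b hb hab
  refine sum_lt_sum_of_nonempty hS fun i hi => pow_lt_pow_left₀ ?_ (inv_pos.2 hb).le ?_
  · exact (inv_lt_inv₀ hb ha).2 hab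
  · have := hSn i hi
    omega

lemma invPowSum_le_of_subset (hx : 0 < x) (hST : S ⊆ T) :
    invPowSum n S x ≤ invPowSum n T x :=
  sum_le_sum_of_subset_of_nonneg hST fun _ _ _ => by positivity

lemma eq_of_subset_of_invPowSum_eq (hx : 0 < x) (hST : S ⊆ T)
    (h : invPowSum n S x = invPowSum n T x) : S = T := by
  by_contra hne
  obtain ⟨i, hiT, hiS⟩ := exists_of_ssubset (ssubset_of_subset_of_ne hST hne)
  exact h.not_lt <|
    sum_lt_sum_of_subset hST hiT hiS (pow_pos (inv_pos.2 hx) _) fun _ _ _ => by positivity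

end InvPowSum

theorem root_le_and_eq_iff {t : ℝ} (ht : 1 < t) (hroot : t ^ 3 = t + 1) {n : ℕ} (hn : 1 ≤ n)
    {M : Finset ℕ} (h0M : 0 ∈ M) (hMn : ∀ j ∈ M, 2 * j ≤ n - 1) {r : ℝ} (hr : 0 < r)
    (hrM : r ^ n - ∑ i ∈ M, r ^ i = 0) :
    r ≤ t ∧ (r = t ↔ (n = 3 ∨ n = 5) ∧ M = range ((n - 1) / 2 + 1)) := by
  set R := range ((n - 1) / 2 + 1)
  have ht0 : 0 < t := by linarith
  have hMR : M ⊆ R := fun j hj => mem_range.2 (by have := hMn j hj; omega)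
  have hRn : ∀ i ∈ R, i < n := fun i hi => by have := mem_range.1 hi; omega
  have hF := invPowSum_strictAntiOn ⟨0, h0M⟩ fun i hi => hRn i (hMR hi)
  have hFr : invPowSum n M r = 1 :=
    (pow_sub_sum_pow_eq_zero_iff hr fun i hi => (hRn i (hMR hi)).le).1 hrM
  have hFRt : invPowSum n R t ≤ 1 :=
    (pow_sub_sum_pow_nonneg_iff ht0 fun i hi => (hRn i hi).le).1
      (pFull_nonneg_of_root ht hroot hn)
  have hFMt : invPowSum n M t ≤ invPowSum n R t := invPowSum_le_of_subset ht0 hMR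
  have hFRt_eq : invPowSum n R t = 1 ↔ n = 3 ∨ n = 5 := by
    rw [← pow_sub_sum_pow_eq_zero_iff ht0 fun i hi => (hRn i hi).le]
    exact pFull_eq_zero_iff_of_root ht hroot hn
  refine ⟨(hF.le_iff_ge ht0 hr).1 ((hFMt.trans hFRt).trans hFr.ge), ?_⟩
  have hrt : r = t ↔ invPowSum n M t = 1 :=
    ⟨fun h => h ▸ hFr, fun h => hF.injOn hr ht0 (hFr.trans h.symm)⟩
  rw [hrt]
  constructor
  · intro h
    have hR1 : invPowSum n R t = 1 := le_antisymm hFRt (h ▸ hFMt)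
    exact ⟨hFRt_eq.1 hR1, eq_of_subset_of_invPowSum_eq ht0 hMR (h.trans hR1.symm)⟩
  · rintro ⟨h35, hM⟩
    rw [hM]
    exact hFRt_eq.2 h35

/-- With `t_P` the unique positive root of `t³ - t - 1`: `p_n(t_P) > 0` for all
`n ∉ {3,5}`, and every positive root of a polynomial of the family `𝒫` is at most
`t_P`, with equality exactly for `t³ - t - 1` and `t⁵ - t² - t - 1`. -/
theorem stmt17 (tP : ℝ) (htP : 0 < tP) (hroot : tP ^ 3 - tP - 1 = 0) :
    (∀ n : ℕ, 1 ≤ n → n ≠ 3 → n ≠ 5 →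
      0 < tP ^ n - ∑ i ∈ Finset.range ((n - 1) / 2 + 1), tP ^ i) ∧
    (∀ (n : ℕ) (M : Finset ℕ), 1 ≤ n → 0 ∈ M → (∀ j ∈ M, 2 * j ≤ n - 1) →
      ∀ r : ℝ, 0 < r → r ^ n - ∑ i ∈ M, r ^ i = 0 →
        r ≤ tP ∧
        (r = tP ↔ (n = 3 ∧ M = {0, 1}) ∨ (n = 5 ∧ M = {0, 1, 2}))) := by
  have hroot' : tP ^ 3 = tP + 1 := by linarith
  have ht : 1 < tP := by
    by_contra h
    have : tP ^ 3 ≤ 1 := pow_le_one₀ htP.le (not_lt.1 h)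
    linarith
  refine ⟨fun n hn h3 h5 => pFull_pos_of_root ht hroot' hn h3 h5, ?_⟩
  intro n M hn h0M hMn r hr hrM
  obtain ⟨hle, heq⟩ := root_le_and_eq_iff ht hroot' hn h0M hMn hr hrM
  refine ⟨hle, heq.trans ?_⟩
  constructor
  · rintro ⟨rfl | rfl, rfl⟩
    · exact Or.inl ⟨rfl, by decide⟩
    · exact Or.inr ⟨rfl, by decide⟩
  · rintro (⟨rfl, rfl⟩ | ⟨rfl, rfl⟩)
    · exact ⟨Or.inl rfl, by decide⟩
    · exact ⟨Or.inr rfl, by decide⟩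
end

section
/- If the length of q_0 (the shortest element of P_q) does not divide |q|, and P_q* is maximal with respect to inclusion among all sets P_{q'}* for nonempty words q', then |q_0| > |q|/2. -/
/-! Write `p = |q₀|` and suppose `|q| ≥ 2p`. The word `q' = q.take (|q| - p)`, which equals
`q.drop p`, is nonempty, and every word of `P_q` is a product of at most two words of `P_{q'}`;
so `P_q^* ⊆ P_{q'}^*`, and maximality puts `q'` into `P_q^*`. Every factor `v` of `q'` then has
`|v| + p ≤ |q|`, and since `q` has both periods `p` and `|v|`, subtracting `p` from `|v|` as in
the Fine–Wilf argument and using the minimality of `p` shows `p ∣ |v|`. Hence `p ∣ |q| - p`,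
so `p ∣ |q|`. -/

section

variable {X : Type*}

/-- `q[i + m] = q[i]` whenever both sides are defined (see `hasPeriod_iff_getElem?`). -/
def HasPeriod (q : List X) (m : ℕ) : Prop := q.drop m <+: q

theorem hasPeriod_iff_getElem? {q : List X} {m : ℕ} :
    HasPeriod q m ↔ ∀ i, i + m < q.length → q[i + m]? = q[i]? := by
  rw [HasPeriod, List.prefix_iff_getElem?]
  refine forall_congr' fun i => ⟨fun h hi => ?_, fun h hi => ?_⟩
  · rw [h (by rw [List.length_drop]; omega), List.getElem_drop, List.getElem?_eq_getElem hi]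
    simp only [Nat.add_comm]
  · have him : i + m < q.length := by rw [List.length_drop] at hi; omega
    rw [List.getElem_drop, ← h him, List.getElem?_eq_getElem him]
    simp only [Nat.add_comm]

theorem hasPeriod_length_of_prefix_append {q v : List X} (h : q <+: v ++ q) :
    HasPeriod q v.length := by
  unfold HasPeriod
  simpa using h.drop v.length

theorem HasPeriod.prefix_take_append {q : List X} {m : ℕ} (h : HasPeriod q m) :
    q <+: q.take m ++ q := by
  conv_lhs => rw [← List.take_append_drop m q]
  exact (List.prefix_append_right_inj _).mpr h

theorem HasPeriod.drop_eq_take {q : List X} {p : ℕ} (h : HasPeriod q p) :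
    q.drop p = q.take (q.length - p) := by
  simpa using List.prefix_iff_eq_take.mp h

theorem HasPeriod.take {q : List X} {m : ℕ} (h : HasPeriod q m) (t : ℕ) :
    HasPeriod (q.take t) m := by
  rw [HasPeriod, List.drop_take]
  exact (List.IsPrefix.take h (t - m)).trans (List.take_prefix_take_left (Nat.sub_le t m))

theorem HasPeriod.sub_of_drop {q : List X} {p m : ℕ} (hp : HasPeriod q p) (hm : HasPeriod q m)
    (hpm : p ≤ m) : HasPeriod (q.drop p) (m - p) := by
  rw [HasPeriod, List.drop_drop, Nat.add_sub_cancel' hpm, hp.drop_eq_take, List.prefix_take_iff]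
  exact ⟨hm, by rw [List.length_drop]; omega⟩

theorem HasPeriod.sub {q : List X} {p m : ℕ} (hp : HasPeriod q p) (hm : HasPeriod q m)
    (hpm : p ≤ m) (hn : p + m ≤ q.length) : HasPeriod q (m - p) := by
  rw [hasPeriod_iff_getElem?] at hp hm ⊢
  intro i hi
  by_cases him : i + m < q.length
  · calc q[i + (m - p)]? = q[i + (m - p) + p]? := (hp _ (by omega)).symm
      _ = q[i + m]? := by congr 1; omega
      _ = q[i]? := hm i him
  · calc q[i + (m - p)]? = q[i - p + m]? := by congr 1; omega
      _ = q[i - p]? := hm _ (by omega)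
      _ = q[i - p + p]? := (hp _ (by omega)).symm
      _ = q[i]? := by congr 1; omega

theorem HasPeriod.dvd_of_minimal {q : List X} {p m : ℕ} (hp0 : 0 < p) (hp : HasPeriod q p)
    (hmin : ∀ k, 0 < k → k ≤ q.length → HasPeriod q k → p ≤ k)
    (hm : HasPeriod q m) (hn : p + m ≤ q.length) : p ∣ m := by
  induction m using Nat.strong_induction_on with
  | _ m ih =>
    rcases Nat.eq_zero_or_pos m with rfl | hm0
    · exact dvd_zero p
    have hpm : p ≤ m := hmin m hm0 (by omega) hm
    exact (Nat.dvd_sub_iff_left hpm (dvd_refl p)).mp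
      (ih (m - p) (by omega) (hp.sub hm hpm hn) (by omega))

theorem mem_Pq_iff {q v : List X} :
    v ∈ Pq q ↔ v ≠ [] ∧ v <+: q ∧ HasPeriod q v.length := by
  refine and_congr_right fun _ => and_congr_right fun hv =>
    ⟨hasPeriod_length_of_prefix_append, fun h => ?_⟩
  simpa [← List.prefix_iff_eq_take.mp hv] using h.prefix_take_append

theorem self_mem_Pq {q : List X} (hq : q ≠ []) : q ∈ Pq q :=
  ⟨hq, List.prefix_refl q, List.prefix_append q q⟩

theorem take_mem_Pq_s19 {q : List X} {m : ℕ} (hm0 : 0 < m) (hm : m ≤ q.length) (h : HasPeriod q m) :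
    q.take m ∈ Pq q :=
  mem_Pq_iff.mpr ⟨List.ne_nil_of_length_pos (by rw [List.length_take]; omega),
    List.take_prefix m q, by simpa [hm] using h⟩

theorem mem_Pq_take {q v : List X} {t : ℕ} (hv : v ∈ Pq q) (ht : v.length ≤ t) :
    v ∈ Pq (q.take t) := by
  obtain ⟨hne, hpre, hper⟩ := mem_Pq_iff.mp hv
  exact mem_Pq_iff.mpr ⟨hne, List.prefix_take_iff.mpr ⟨hpre, ht⟩, hper.take t⟩

theorem inStar_of_mem {P : Set (List X)} {v : List X} (hv : v ∈ P) : InStar P v :=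
  ⟨[v], by simpa using hv, by simp⟩

theorem InStar.append_s19 {P : Set (List X)} {u v : List X} (hu : InStar P u) (hv : InStar P v) :
    InStar P (u ++ v) := by
  obtain ⟨lu, hlu, rfl⟩ := hu
  obtain ⟨lv, hlv, rfl⟩ := hv
  exact ⟨lu ++ lv, by simpa [or_imp, forall_and] using ⟨hlu, hlv⟩, by simp⟩

theorem InStar.trans {P R : Set (List X)} {w : List X} (hw : InStar P w)
    (h : ∀ v ∈ P, InStar R v) : InStar R w := by
  obtain ⟨l, hl, rfl⟩ := hw
  induction l with
  | nil => exact ⟨[], by simp, rfl⟩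
  | cons a l ih =>
    rw [List.flatten_cons]
    exact (h a (hl a List.mem_cons_self)).append_s19 (ih fun v hv => hl v (List.mem_cons_of_mem a hv))

/-- A word of `P_q` longer than `|q| - p` is cut after its first `p` letters; both pieces lie in
`P_{q'}` because `q' = q.take (|q| - p)` is also `q.drop p`. -/
theorem inStar_Pq_take_of_mem_Pq {q v : List X} {p : ℕ} (hp0 : 0 < p) (hp : HasPeriod q p)
    (h2p : 2 * p ≤ q.length) (hv : v ∈ Pq q) : InStar (Pq (q.take (q.length - p))) v := by
  obtain ⟨hne, hpre, hper⟩ := mem_Pq_iff.mp hv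
  by_cases hshort : v.length ≤ q.length - p
  · exact inStar_of_mem (mem_Pq_take hv hshort)
  have hhead : v.take p ∈ Pq q := mem_Pq_iff.mpr
    ⟨List.ne_nil_of_length_pos (by rw [List.length_take]; omega),
      (List.take_prefix p v).trans hpre,
      by rwa [List.length_take, min_eq_left (by omega)]⟩
  have htail : v.drop p ∈ Pq (q.take (q.length - p)) := by
    rw [← hp.drop_eq_take]
    exact mem_Pq_iff.mpr ⟨List.ne_nil_of_length_pos (by rw [List.length_drop]; omega),
      hpre.drop p, by simpa using hp.sub_of_drop hper (by omega)⟩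
  have hhead_len : (v.take p).length ≤ q.length - p := by rw [List.length_take]; omega
  rw [← List.take_append_drop p v]
  exact (inStar_of_mem (mem_Pq_take hhead hhead_len)).append_s19 (inStar_of_mem htail)

theorem dvd_length_of_inStar_Pq {q w : List X} {p : ℕ} (hp0 : 0 < p) (hp : HasPeriod q p)
    (hmin : ∀ k, 0 < k → k ≤ q.length → HasPeriod q k → p ≤ k)
    (hw : InStar (Pq q) w) (hwn : w.length + p ≤ q.length) : p ∣ w.length := by
  obtain ⟨l, hl, rfl⟩ := hw
  rw [List.length_flatten]
  refine List.dvd_sum fun _ hk => ?_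
  obtain ⟨v, hv, rfl⟩ := List.mem_map.mp hk
  have hvw : v.length ≤ l.flatten.length := (List.sublist_flatten_of_mem hv).length_le
  exact hp.dvd_of_minimal hp0 hmin (mem_Pq_iff.mp (hl v hv)).2.2 (by omega)

end

theorem stmt19_general {X : Type*} (q : List X) (q0 : List X)
    (h0 : q0 ∈ Pq q) (hmin : ∀ v ∈ Pq q, q0.length ≤ v.length)
    (hdvd : ¬ q0.length ∣ q.length)
    (hmax : ∀ q' : List X, q' ≠ [] →
      {w : List X | InStar (Pq q) w} ⊆ {w : List X | InStar (Pq q') w} →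
      {w : List X | InStar (Pq q) w} = {w : List X | InStar (Pq q') w}) :
    q.length < 2 * q0.length := by
  by_contra! h2p
  obtain ⟨hq0ne, -, hper⟩ := mem_Pq_iff.mp h0
  have hp0 : 0 < q0.length := List.length_pos_iff.mpr hq0ne
  have hminper : ∀ k, 0 < k → k ≤ q.length → HasPeriod q k → q0.length ≤ k :=
    fun k hk hkn hk_per => by simpa [hkn] using hmin _ (take_mem_Pq_s19 hk hkn hk_per)
  set q' := q.take (q.length - q0.length)
  have hq'len : q'.length = q.length - q0.length := by simp [q']
  have hq' : q' ≠ [] := List.ne_nil_of_length_pos (by omega)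
  have hsub : {w | InStar (Pq q) w} ⊆ {w | InStar (Pq q') w} :=
    fun w hw => InStar.trans hw fun v hv => inStar_Pq_take_of_mem_Pq hp0 hper h2p hv
  have hq'star : InStar (Pq q) q' :=
    (Set.ext_iff.mp (hmax q' hq' hsub) q').mpr (inStar_of_mem (self_mem_Pq hq'))
  have hdvd' := dvd_length_of_inStar_Pq hp0 hper hminper hq'star (by omega)
  rw [hq'len, Nat.dvd_sub_iff_left (by omega) (dvd_refl _)] at hdvd'
  exact hdvd hdvd'

/-- If `|q₀|` does not divide `|q|` and `P_q^*` is ⊆-maximal among the `P_{q'}^*`,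
then `|q₀| > |q|/2`. -/
theorem stmt19 {X : Type*} (q : List X) (hq : q ≠ []) (q0 : List X)
    (h0 : q0 ∈ Pq q) (hmin : ∀ v ∈ Pq q, q0.length ≤ v.length)
    (hdvd : ¬ q0.length ∣ q.length)
    (hmax : ∀ q' : List X, q' ≠ [] →
      {w : List X | InStar (Pq q) w} ⊆ {w : List X | InStar (Pq q') w} →
      {w : List X | InStar (Pq q) w} = {w : List X | InStar (Pq q') w}) :
    q.length < 2 * q0.length :=
  stmt19_general q q0 h0 hmin hdvd hmax
end
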